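/- Let A be an associative k-algebra with subalgebra R, and let e be an idempotent in R such that ReR = R. Write 1 = Σ_i p_i e q_i with p_i, q_i ∈ R, and define Tr: A → eAe by Tr(a) = Σ_i e q_i a p_i e. Then Tr sends commutators to commutators, i.e., Tr(ab - ba) ∈ [eAe, eAe] for all a, b ∈ A. -/

import Mathlib

/-!
Write `M(a)` for the `ι × ι` matrix over the corner `eAe` with entries `e (q i a p j) e`.
Inserting `1 = ∑ j, p j e q j` between `a` and `b` and using `e² = e` shows `M(ab) = M(a) M(b)`,
and `Tr a` is the trace of `M(a)`. Over any ring, `tr(XY) - tr(YX) = ∑ i j, [X i j, Y j i]`,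
so `Tr(ab - ba)` is a sum of commutators of elements of `eAe`.
-/

open Matrix

theorem Matrix.trace_mul_sub_trace_mul {ι A : Type*} [Fintype ι] [Ring A] (X Y : Matrix ι ι A) :
    trace (X * Y) - trace (Y * X) = ∑ i, ∑ j, (X i j * Y j i - Y j i * X i j) := by
  simp only [trace, diag, mul_apply, Finset.sum_sub_distrib]
  rw [Finset.sum_comm (f := fun i j => Y i j * X j i)]

section CornerMatrix

variable {A ι : Type*} [Ring A] {e : A} {p q : ι → A}

def cornerMatrix (e : A) (p q : ι → A) (a : A) : Matrix ι ι A :=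
  of fun i j => e * (q i * a * p j) * e

theorem cornerMatrix_sub (a b : A) :
    cornerMatrix e p q (a - b) = cornerMatrix e p q a - cornerMatrix e p q b := by
  ext i j
  simp only [cornerMatrix, of_apply, Matrix.sub_apply, mul_sub, sub_mul]

theorem cornerMatrix_mul [Fintype ι] (he : IsIdempotentElem e)
    (hdec : (1 : A) = ∑ i, p i * e * q i) (a b : A) :
    cornerMatrix e p q (a * b) = cornerMatrix e p q a * cornerMatrix e p q b := by
  have hab : a * b = ∑ j, a * (p j * e * q j) * b := by
    rw [← Finset.sum_mul, ← Finset.mul_sum, ← hdec, mul_one]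
  ext i k
  simp only [cornerMatrix, of_apply, mul_apply, hab, Finset.mul_sum, Finset.sum_mul]
  refine Finset.sum_congr rfl fun j _ => ?_
  simp only [mul_assoc, he.mul_self_mul]

theorem trace_cornerMatrix [Fintype ι] (a : A) :
    trace (cornerMatrix e p q a) = ∑ i, e * q i * a * (p i * e) := by
  simp only [trace, diag, cornerMatrix, of_apply, mul_assoc]

end CornerMatrix

theorem trace_sends_commutators_to_commutators
    {k : Type*} [Field k] {A : Type*} [Ring A] [Algebra k A]
    (e : A) (hidem : e * e = e)
    {ι : Type*} [Fintype ι] (p q : ι → A)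
    (hdec : (1 : A) = ∑ i, p i * e * q i)
    (a b : A) :
    (∑ i, e * q i * (a * b - b * a) * (p i * e)) ∈
      Submodule.span k
        {z : A | ∃ x y : A, z = (e * x * e) * (e * y * e) - (e * y * e) * (e * x * e)} := by
  rw [← trace_cornerMatrix, cornerMatrix_sub, cornerMatrix_mul hidem hdec,
    cornerMatrix_mul hidem hdec, trace_sub, trace_mul_sub_trace_mul]
  exact Submodule.sum_mem _ fun i _ => Submodule.sum_mem _ fun j _ =>
    Submodule.subset_span ⟨q i * a * p j, q j * b * p i, rfl⟩
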